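/- arXiv:1102.5206 — 2 statements merged into one kernel-verified Lean document; each statement's English description precedes it below -/
import Mathlib

section
/- For all m ≥ 4 with m ∉ {5,6,9}, the domination number of the 4×m grid graph equals m; and for m ∈ {5,6,9} it equals m+1. -/
/-- The `n × m` grid graph: vertices `[n] × [m]`, with `(i,j)` adjacent to `(k,l)`
iff `|i-k| + |j-l| = 1`. -/
def gridGraph (n m : ℕ) : SimpleGraph (Fin n × Fin m) where
  Adj u v := Nat.dist u.1.val v.1.val + Nat.dist u.2.val v.2.val = 1
  symm := ⟨by intro u v h; simpa [Nat.dist_comm] using h⟩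
  loopless := ⟨by intro u h; simp [Nat.dist_self] at h⟩

instance (n m : ℕ) : DecidableRel (gridGraph n m).Adj :=
  fun _ _ => instDecidableEqNat _ _

/-- Closed neighborhood `N[S]` of a set of vertices. -/
def closedNbhd (n m : ℕ) (S : Finset (Fin n × Fin m)) : Finset (Fin n × Fin m) :=
  S.biUnion fun v => insert v ((gridGraph n m).neighborFinset v)

/-- The loss `ℓ(S) = 5|S| - |N[S]|`. -/
def loss (n m : ℕ) (S : Finset (Fin n × Fin m)) : ℤ :=
  5 * S.card - (closedNbhd n m S).card

/-- `D` is a dominating set: every vertex lies in `N[D]`. -/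
def IsDominating (n m : ℕ) (D : Finset (Fin n × Fin m)) : Prop :=
  closedNbhd n m D = Finset.univ

/-- The domination number `γ(G_{n,m})`. -/
noncomputable def domNumber (n m : ℕ) : ℕ :=
  sInf {k | ∃ D : Finset (Fin n × Fin m), IsDominating n m D ∧ D.card = k}

/-- The minimum loss `ℓ_{n,m}` over dominating sets of `G_{n,m}`. -/
noncomputable def minLoss (n m : ℕ) : ℤ :=
  sInf {l | ∃ D : Finset (Fin n × Fin m), IsDominating n m D ∧ loss n m D = l}

/-!
Read the grid column by column. After `j` columns, a dominating set `D` leaves each row in one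
of three states: the last cell read lies in `D`, is dominated, or still has to be dominated by
the next column. So `D` determines a walk of length `m` through `3⁴` states, from and to states
with no waiting cell, in which each step costs the number of cells of `D` in the column read.
A potential `ψ` with `ψ(s') - ψ(s) ≤ |c| - 1` along every step, `ψ = 1` at the start and
`ψ ≥ 1` at the end, shows that every walk costs at least `m`; for `m = 5, 6, 9` the least
costs of walks, computed by dynamic programming, are `m + 1`. Explicit dominating sets for
`m = 4, 5, 6, 7, 10, 13`, placed side by side, give the matching upper bounds.
-/

open Finset

lemma isDominating_iff {n m : ℕ} (D : Finset (Fin n × Fin m)) :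
    IsDominating n m D ↔ ∀ v, ∃ d ∈ D, v = d ∨ (gridGraph n m).Adj d v := by
  simp [IsDominating, closedNbhd, eq_univ_iff_forall]

lemma domNumber_eq {n m k : ℕ} {D : Finset (Fin n × Fin m)} (hD : IsDominating n m D)
    (hcard : D.card = k)
    (hmin : ∀ E : Finset (Fin n × Fin m), IsDominating n m E → k ≤ E.card) :
    domNumber n m = k :=
  le_antisymm (Nat.sInf_le ⟨D, hD, hcard⟩)
    (le_csInf ⟨k, D, hD, hcard⟩ (by rintro _ ⟨E, hE, rfl⟩; exact hmin E hE))

def HasDominatingSet (n m k : ℕ) : Prop :=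
  ∃ D : Finset (Fin n × Fin m), IsDominating n m D ∧ D.card = k

lemma gridGraph_adj_shift {n m m' t : ℕ} (φ : Fin m → Fin m')
    (hφ : ∀ j, (φ j : ℕ) = t + j) {u v : Fin n × Fin m} :
    (gridGraph n m').Adj (u.1, φ u.2) (v.1, φ v.2) ↔ (gridGraph n m).Adj u v := by
  simp only [gridGraph, hφ, Nat.dist_add_add_left]

lemma dominated_shift {n m m' t : ℕ} (φ : Fin m ↪ Fin m') (hφ : ∀ j, (φ j : ℕ) = t + j)
    {d v : Fin n × Fin m} (h : v = d ∨ (gridGraph n m).Adj d v) :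
    (v.1, φ v.2) = (d.1, φ d.2) ∨ (gridGraph n m').Adj (d.1, φ d.2) (v.1, φ v.2) := by
  rw [gridGraph_adj_shift φ hφ]
  rcases h with rfl | h
  exacts [Or.inl rfl, Or.inr h]

lemma HasDominatingSet.append {n m k a b : ℕ} (hD : HasDominatingSet n m a)
    (hE : HasDominatingSet n k b) : HasDominatingSet n (m + k) (a + b) := by
  obtain ⟨D, hD, rfl⟩ := hD
  obtain ⟨E, hE, rfl⟩ := hE
  let f := (Function.Embedding.refl (Fin n)).prodMap (Fin.castAddEmb k : Fin m ↪ Fin (m + k))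
  let g := (Function.Embedding.refl (Fin n)).prodMap (Fin.natAddEmb m : Fin k ↪ Fin (m + k))
  refine ⟨D.map f ∪ E.map g, ?_, ?_⟩
  · rw [isDominating_iff] at hD hE ⊢
    rintro ⟨i, j⟩
    induction j using Fin.addCases with
    | left j =>
      obtain ⟨d, hd, h⟩ := hD (i, j)
      exact ⟨f d, mem_union_left _ (mem_map_of_mem f hd),
        dominated_shift (Fin.castAddEmb k) (t := 0) (by simp) h⟩
    | right j =>
      obtain ⟨e, he, h⟩ := hE (i, j)
      exact ⟨g e, mem_union_right _ (mem_map_of_mem g he),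
        dominated_shift (Fin.natAddEmb m) (t := m) (by simp) h⟩
  · rw [card_union_of_disjoint, card_map, card_map]
    simp only [disjoint_left, mem_map]
    rintro _ ⟨d, -, rfl⟩ ⟨e, -, he⟩
    have := congrArg (fun v => (v.2 : ℕ)) he
    simp only [f, g, Function.Embedding.coe_prodMap, Prod.map_snd, Fin.natAddEmb_apply,
      Fin.val_natAdd, Fin.coe_castAddEmb, Fin.val_castAdd] at this
    omega

/-- Sweeping the grid column by column, the state records for each row `i` the status of the
cell `(i, j - 1)` in the last column read: `0` if it lies in `D`, `1` if it is dominated by the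
columns read so far without lying in `D`, `2` if it is not yet dominated. -/
abbrev ColState (n : ℕ) := Fin n → Fin 3

abbrev Column (n : ℕ) := Fin n → Bool

namespace Column

variable {n : ℕ}

def weight (c : Column n) : ℕ := #{i | c i = true}

def CoversVertically (c : Column n) (i : Fin n) : Prop :=
  ∃ i' : Fin n, Nat.dist i' i = 1 ∧ c i' = true

instance (c : Column n) (i : Fin n) : Decidable (c.CoversVertically i) :=
  inferInstanceAs (Decidable (∃ _, _))

end Column

namespace ColState

variable {n : ℕ}

def init : ColState n := fun _ => 1

def next (s : ColState n) (c : Column n) : ColState n := fun i =>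
  if c i = true then 0 else if s i = 0 ∨ c.CoversVertically i then 1 else 2

def Compatible (s : ColState n) (c : Column n) : Prop := ∀ i, s i = 2 → c i = true

instance (s : ColState n) (c : Column n) : Decidable (s.Compatible c) :=
  inferInstanceAs (Decidable (∀ _, _))

def Settled (s : ColState n) : Prop := ∀ i, s i ≠ 2

instance (s : ColState n) : Decidable s.Settled := inferInstanceAs (Decidable (∀ _, _))

lemma next_eq_zero_iff {s : ColState n} {c : Column n} {i : Fin n} :
    s.next c i = 0 ↔ c i = true := by
  unfold next; split_ifs <;> simp_all

lemma next_eq_two_iff {s : ColState n} {c : Column n} {i : Fin n} :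
    s.next c i = 2 ↔ c i = false ∧ s i ≠ 0 ∧ ¬ c.CoversVertically i := by
  unfold next; split_ifs <;> simp_all [or_iff_not_imp_left]

end ColState

section Trace

variable {n m : ℕ} (D : Finset (Fin n × Fin m))

def column (j : ℕ) : Column n := fun i =>
  if hj : j < m then decide ((i, ⟨j, hj⟩) ∈ D) else false

def trace : ℕ → ColState n
  | 0 => .init
  | j + 1 => (trace j).next (column D j)

lemma trace_succ (j : ℕ) : trace D (j + 1) = (trace D j).next (column D j) := rfl

variable {D}

lemma column_apply {j : Fin m} {i : Fin n} : column D j i = true ↔ (i, j) ∈ D := by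
  simp [column]

lemma card_eq_sum_weight (D : Finset (Fin n × Fin m)) :
    D.card = ∑ j ∈ range m, (column D j).weight := by
  calc D.card = ∑ v : Fin n × Fin m, if v ∈ D then 1 else 0 := by simp
    _ = ∑ j : Fin m, ∑ i : Fin n, if (i, j) ∈ D then 1 else 0 := Fintype.sum_prod_type_right _
    _ = ∑ j : Fin m, (column D j).weight := by
      refine sum_congr rfl fun j _ => ?_
      simp only [Column.weight, card_filter, column_apply]
    _ = _ := Fin.sum_univ_eq_sum_range (fun j => (column D j).weight) m

lemma trace_succ_eq_zero_iff {j : ℕ} {i : Fin n} :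
    trace D (j + 1) i = 0 ↔ column D j i = true :=
  ColState.next_eq_zero_iff

lemma column_succ_of_trace_eq_two (hD : IsDominating n m D) {j : ℕ} (hj : j < m) {i : Fin n}
    (h : trace D (j + 1) i = 2) : column D (j + 1) i = true := by
  obtain ⟨hji, hprev, hvert⟩ := ColState.next_eq_two_iff.mp h
  obtain ⟨⟨i', j'⟩, hd, hdom⟩ := (isDominating_iff D).mp hD (i, ⟨j, hj⟩)
  have hcol : column D j' i' = true := column_apply.mpr hd
  have hcases :
      ((i' : ℕ) = i ∧ ((j' : ℕ) = j ∨ (j' : ℕ) + 1 = j ∨ (j' : ℕ) = j + 1)) ∨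
        (Nat.dist i' i = 1 ∧ (j' : ℕ) = j) := by
    rcases hdom with h | h
    · simp only [Prod.ext_iff, Fin.ext_iff] at h; omega
    · simp only [gridGraph, Nat.dist] at h ⊢; omega
  obtain ⟨hi, hj' | hj' | hj'⟩ | ⟨hi, hj'⟩ := hcases
  · rw [Fin.ext hi, hj', hji] at hcol
    exact absurd hcol Bool.false_ne_true
  · rw [← hj'] at hprev
    exact absurd (trace_succ_eq_zero_iff.mpr (Fin.ext hi ▸ hcol)) hprev
  · rwa [Fin.ext hi, hj'] at hcol
  · exact absurd ⟨i', hi, hj' ▸ hcol⟩ hvert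

lemma trace_compatible (hD : IsDominating n m D) {j : ℕ} (hj : j < m) :
    (trace D j).Compatible (column D j) := by
  intro i h
  cases j with
  | zero => simp [trace, ColState.init] at h
  | succ j => exact column_succ_of_trace_eq_two hD (by omega) h

lemma trace_settled (hD : IsDominating n m D) : (trace D m).Settled := by
  intro i h
  cases m with
  | zero => simp [trace, ColState.init] at h
  | succ m => simpa [column] using column_succ_of_trace_eq_two hD (by omega) h

theorem le_card_of_potential (f : ℕ → ColState n → ℤ) (t : ℤ) (hinit : f 0 .init ≤ 0)
    (hstep : ∀ j < m, ∀ (s : ColState n) (c : Column n), s.Compatible c →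
      f (j + 1) (s.next c) ≤ f j s + c.weight)
    (hfinal : ∀ s : ColState n, s.Settled → t ≤ f m s) (hD : IsDominating n m D) :
    t ≤ D.card := by
  have hprefix :
      ∀ j ≤ m, f j (trace D j) ≤ ∑ j' ∈ range j, ((column D j').weight : ℤ) := by
    intro j hj
    induction j with
    | zero => simpa [trace] using hinit
    | succ j ih =>
      rw [sum_range_succ, trace_succ]
      linarith [ih (by omega), hstep j hj _ _ (trace_compatible hD hj)]
  calc t ≤ f m (trace D m) := hfinal _ (trace_settled hD)
    _ ≤ _ := hprefix m le_rfl
    _ = D.card := by rw [card_eq_sum_weight D]; push_cast; rfl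

end Trace

def ColState.code (s : ColState 4) : ℕ := s 0 + 3 * s 1 + 9 * s 2 + 27 * s 3

/-- A feasible solution of the dual of the shortest-walk problem, found by computer. The entries
`51` belong to the states that never occur: a cell of `D` next to an undominated cell. -/
def potentialTable : List ℕ :=
  [3, 3, 51, 2, 2, 2, 51, 51, 51,
   2, 2, 51, 2, 2, 1, 51, 1, 1,
   51, 51, 51, 51, 51, 51, 51, 51, 51,
   3, 2, 51, 2, 1, 1, 51, 51, 51,
   2, 1, 51, 2, 1, 2, 51, 1, 1,
   51, 51, 51, 1, 1, 1, 51, 1, 1,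
   51, 51, 51, 51, 51, 51, 51, 51, 51,
   2, 1, 51, 1, 2, 1, 51, 1, 0,
   51, 51, 51, 1, 1, 0, 51, 1, 0]

/-- Row `j` lists the least number of cells of `D` in the first `j` columns over all partial
sets `D` with state `s` after `j` columns (`100` if no such set exists), computed by
dynamic programming. -/
def prefixCostTable : List (List ℕ) :=
  [[100, 100, 100, 100, 100, 100, 100, 100, 100,
    100, 100, 100, 100, 100, 100, 100, 100, 100,
    100, 100, 100, 100, 100, 100, 100, 100, 100,
    100, 100, 100, 100, 100, 100, 100, 100, 100,
    100, 100, 100, 100, 0, 100, 100, 100, 100,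
    100, 100, 100, 100, 100, 100, 100, 100, 100,
    100, 100, 100, 100, 100, 100, 100, 100, 100,
    100, 100, 100, 100, 100, 100, 100, 100, 100,
    100, 100, 100, 100, 100, 100, 100, 100, 100],
   [4, 3, 100, 3, 100, 2, 100, 100, 100,
    3, 2, 100, 2, 100, 100, 100, 100, 1,
    100, 100, 100, 100, 100, 100, 100, 100, 100,
    3, 2, 100, 2, 100, 1, 100, 100, 100,
    100, 100, 100, 100, 100, 100, 100, 100, 100,
    100, 100, 100, 100, 100, 100, 100, 100, 100,
    100, 100, 100, 100, 100, 100, 100, 100, 100,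
    2, 1, 100, 100, 100, 100, 100, 100, 100,
    100, 100, 100, 1, 100, 100, 100, 100, 0],
   [4, 4, 100, 4, 3, 3, 100, 100, 100,
    4, 3, 100, 3, 3, 2, 100, 3, 100,
    100, 100, 100, 100, 100, 100, 100, 100, 100,
    4, 4, 100, 3, 3, 3, 100, 100, 100,
    3, 3, 100, 3, 4, 3, 100, 3, 100,
    100, 100, 100, 3, 3, 2, 100, 2, 100,
    100, 100, 100, 100, 100, 100, 100, 100, 100,
    3, 3, 100, 2, 3, 2, 100, 2, 100,
    100, 100, 100, 100, 100, 100, 100, 100, 100],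
   [6, 5, 100, 5, 4, 5, 100, 100, 100,
    5, 4, 100, 4, 4, 4, 100, 3, 4,
    100, 100, 100, 100, 100, 100, 100, 100, 100,
    5, 4, 100, 4, 4, 4, 100, 100, 100,
    4, 4, 100, 4, 4, 4, 100, 4, 3,
    100, 100, 100, 3, 4, 3, 100, 3, 3,
    100, 100, 100, 100, 100, 100, 100, 100, 100,
    5, 4, 100, 4, 4, 4, 100, 3, 3,
    100, 100, 100, 4, 3, 3, 100, 3, 4],
   [7, 6, 100, 6, 5, 5, 100, 100, 100,
    6, 5, 100, 6, 5, 5, 100, 5, 5,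
    100, 100, 100, 100, 100, 100, 100, 100, 100,
    6, 5, 100, 5, 4, 5, 100, 100, 100,
    5, 4, 100, 5, 6, 5, 100, 5, 4,
    100, 100, 100, 5, 5, 4, 100, 4, 4,
    100, 100, 100, 100, 100, 100, 100, 100, 100,
    5, 5, 100, 5, 5, 4, 100, 4, 4,
    100, 100, 100, 5, 4, 4, 100, 4, 4],
   [8, 7, 100, 7, 7, 6, 100, 100, 100,
    7, 6, 100, 6, 6, 5, 100, 6, 5,
    100, 100, 100, 100, 100, 100, 100, 100, 100,
    7, 6, 100, 6, 6, 5, 100, 100, 100,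
    7, 6, 100, 6, 7, 6, 100, 6, 5,
    100, 100, 100, 6, 6, 5, 100, 6, 5,
    100, 100, 100, 100, 100, 100, 100, 100, 100,
    6, 5, 100, 5, 6, 5, 100, 5, 4,
    100, 100, 100, 5, 5, 4, 100, 5, 6],
   [8, 8, 100, 7, 7, 7, 100, 100, 100,
    7, 7, 100, 7, 7, 6, 100, 6, 7,
    100, 100, 100, 100, 100, 100, 100, 100, 100,
    8, 8, 100, 7, 7, 7, 100, 100, 100,
    7, 7, 100, 7, 8, 7, 100, 7, 7,
    100, 100, 100, 6, 7, 6, 100, 6, 6,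
    100, 100, 100, 100, 100, 100, 100, 100, 100,
    7, 7, 100, 6, 7, 6, 100, 6, 6,
    100, 100, 100, 7, 7, 6, 100, 6, 7],
   [10, 9, 100, 9, 8, 9, 100, 100, 100,
    9, 8, 100, 8, 8, 8, 100, 7, 8,
    100, 100, 100, 100, 100, 100, 100, 100, 100,
    9, 8, 100, 8, 7, 8, 100, 100, 100,
    8, 7, 100, 8, 8, 8, 100, 7, 7,
    100, 100, 100, 7, 7, 7, 100, 7, 7,
    100, 100, 100, 100, 100, 100, 100, 100, 100,
    9, 8, 100, 8, 8, 8, 100, 7, 7,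
    100, 100, 100, 8, 7, 7, 100, 7, 8],
   [11, 10, 100, 10, 9, 9, 100, 100, 100,
    10, 9, 100, 9, 9, 8, 100, 9, 8,
    100, 100, 100, 100, 100, 100, 100, 100, 100,
    10, 9, 100, 9, 8, 8, 100, 100, 100,
    9, 8, 100, 9, 10, 9, 100, 9, 8,
    100, 100, 100, 9, 9, 8, 100, 8, 8,
    100, 100, 100, 100, 100, 100, 100, 100, 100,
    9, 8, 100, 8, 9, 8, 100, 8, 7,
    100, 100, 100, 8, 8, 7, 100, 8, 8],
   [11, 11, 100, 10, 10, 10, 100, 100, 100,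
    10, 10, 100, 10, 10, 9, 100, 9, 9,
    100, 100, 100, 100, 100, 100, 100, 100, 100,
    11, 10, 100, 10, 10, 9, 100, 100, 100,
    10, 10, 100, 10, 11, 10, 100, 10, 9,
    100, 100, 100, 9, 10, 9, 100, 9, 9,
    100, 100, 100, 100, 100, 100, 100, 100, 100,
    10, 9, 100, 9, 10, 9, 100, 9, 8,
    100, 100, 100, 9, 9, 8, 100, 9, 10]]

def potential (s : ColState 4) : ℕ := potentialTable.getD s.code 0

def prefixCost (j : ℕ) (s : ColState 4) : ℕ := (prefixCostTable.getD j []).getD s.code 0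

lemma potential_init : potential .init = 1 := by decide

lemma potential_next : ∀ (s : ColState 4) (c : Column 4), s.Compatible c →
    potential (s.next c) + 1 ≤ potential s + c.weight := by decide

lemma one_le_potential : ∀ s : ColState 4, s.Settled → 1 ≤ potential s := by decide

lemma prefixCost_init : prefixCost 0 .init = 0 := by decide

lemma prefixCost_next : ∀ j < 9, ∀ (s : ColState 4) (c : Column 4), s.Compatible c →
    prefixCost (j + 1) (s.next c) ≤ prefixCost j s + c.weight := by decide

lemma prefixCost_settled : ∀ s : ColState 4, s.Settled →
    6 ≤ prefixCost 5 s ∧ 7 ≤ prefixCost 6 s ∧ 10 ≤ prefixCost 9 s := by decide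

lemma le_card_of_isDominating_four {m : ℕ} {D : Finset (Fin 4 × Fin m)}
    (hD : IsDominating 4 m D) : m ≤ D.card := by
  have := le_card_of_potential (fun j s => j + potential s - 1) m (by simp [potential_init])
    (fun j _ s c hsc => by have := potential_next s c hsc; omega)
    (fun s hs => by have := one_le_potential s hs; omega) hD
  exact_mod_cast this

lemma succ_le_card_of_isDominating_four {m : ℕ} (hm : m ∈ ({5, 6, 9} : Set ℕ))
    {D : Finset (Fin 4 × Fin m)} (hD : IsDominating 4 m D) : m + 1 ≤ D.card := by
  have hm9 : m ≤ 9 := by rcases hm with rfl | rfl | rfl <;> norm_num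
  have := le_card_of_potential (fun j s => prefixCost j s) (m + 1) (by simp [prefixCost_init])
    (fun j hj s c hsc => by exact_mod_cast prefixCost_next j (by omega) s c hsc)
    (fun s hs => by
      obtain ⟨h5, h6, h9⟩ := prefixCost_settled s hs
      rcases hm with rfl | rfl | rfl
      exacts [by exact_mod_cast h5, by exact_mod_cast h6, by exact_mod_cast h9])
    hD
  exact_mod_cast this

lemma hasDominatingSet_4x4 : HasDominatingSet 4 4 4 :=
  ⟨{(2, 0), (0, 1), (3, 2), (1, 3)},
    (isDominating_iff _).mpr (by decide), by decide⟩

lemma hasDominatingSet_4x5 : HasDominatingSet 4 5 6 :=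
  ⟨{(3, 0), (0, 1), (1, 1), (2, 3), (3, 3), (0, 4)},
    (isDominating_iff _).mpr (by decide), by decide⟩

lemma hasDominatingSet_4x6 : HasDominatingSet 4 6 7 :=
  ⟨{(2, 0), (0, 1), (3, 2), (1, 3), (0, 5), (2, 5), (3, 5)},
    (isDominating_iff _).mpr (by decide), by decide⟩

lemma hasDominatingSet_4x7 : HasDominatingSet 4 7 7 :=
  ⟨{(2, 0), (0, 1), (3, 2), (1, 3), (3, 4), (0, 5), (2, 6)},
    (isDominating_iff _).mpr (by decide), by decide⟩

lemma hasDominatingSet_4x10 : HasDominatingSet 4 10 10 :=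
  ⟨{(2, 0), (0, 1), (3, 2), (1, 3), (3, 4), (0, 5), (2, 6), (0, 7), (3, 8), (1, 9)},
    (isDominating_iff _).mpr (by decide), by decide⟩

lemma hasDominatingSet_4x13 : HasDominatingSet 4 13 13 :=
  ⟨{(2, 0), (0, 1), (3, 2), (1, 3), (3, 4), (0, 5), (2, 6), (0, 7), (3, 8), (1, 9), (3, 10),
      (0, 11), (2, 12)},
    (isDominating_iff _).mpr (by decide), by decide⟩

lemma hasDominatingSet_four_self {m : ℕ} (hm : 4 ≤ m) (hm' : m ∉ ({5, 6, 9} : Set ℕ)) :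
    HasDominatingSet 4 m m := by
  induction m using Nat.strong_induction_on with
  | _ m ih =>
    simp only [Set.mem_insert_iff, Set.mem_singleton_iff, not_or] at hm' ih
    obtain rfl | rfl | rfl | rfl | hm8 :
        m = 4 ∨ m = 7 ∨ m = 10 ∨ m = 13 ∨ (8 ≤ m ∧ m ≠ 10 ∧ m ≠ 13) := by omega
    · exact hasDominatingSet_4x4
    · exact hasDominatingSet_4x7
    · exact hasDominatingSet_4x10
    · exact hasDominatingSet_4x13
    · obtain ⟨k, rfl⟩ : ∃ k, m = k + 4 := ⟨m - 4, by omega⟩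
      exact (ih k (by omega) (by omega) (by omega)).append hasDominatingSet_4x4

theorem stmt_11 (m : ℕ) (hm : 4 ≤ m) :
    (m ∉ ({5, 6, 9} : Set ℕ) → domNumber 4 m = m) ∧
    (m ∈ ({5, 6, 9} : Set ℕ) → domNumber 4 m = m + 1) := by
  refine ⟨fun hm' => ?_, fun hm' => ?_⟩
  · obtain ⟨D, hD, hcard⟩ := hasDominatingSet_four_self hm hm'
    exact domNumber_eq hD hcard fun E hE => le_card_of_isDominating_four hE
  · obtain ⟨D, hD, hcard⟩ : HasDominatingSet 4 m (m + 1) := by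
      rcases hm' with rfl | rfl | rfl
      exacts [hasDominatingSet_4x5, hasDominatingSet_4x6,
        hasDominatingSet_4x5.append hasDominatingSet_4x4]
    exact domNumber_eq hD hcard fun E hE => succ_le_card_of_isDominating_four hm' hE
end

section
/- If ℓ_{n,m} ≥ 2(n+m) − 20 for integers 2 ≤ n ≤ m, then γ(G_{n,m}) ≥ ⌈(nm + 2(n+m) − 20)/5⌉ ≥ ⌊(n+2)(m+2)/5⌋ − 4. -/
lemma isDominating_univ (n m : ℕ) : IsDominating n m Finset.univ := by
  ext v
  simp only [closedNbhd, Finset.mem_biUnion, Finset.mem_univ, iff_true]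
  exact ⟨v, trivial, Finset.mem_insert_self _ _⟩

section Dominating

variable {n m : ℕ} {D : Finset (Fin n × Fin m)}

lemma IsDominating.loss_eq (hD : IsDominating n m D) : loss n m D = 5 * D.card - n * m := by
  rw [loss, hD, Finset.card_univ, Fintype.card_prod, Fintype.card_fin, Fintype.card_fin]
  push_cast
  rfl

lemma domNumber_le_card (hD : IsDominating n m D) : domNumber n m ≤ D.card :=
  Nat.sInf_le ⟨D, hD, rfl⟩

end Dominating

lemma exists_isDominating_card_eq_domNumber (n m : ℕ) :
    ∃ D : Finset (Fin n × Fin m), IsDominating n m D ∧ D.card = domNumber n m :=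
  Nat.sInf_mem (s := {k | ∃ D : Finset (Fin n × Fin m), IsDominating n m D ∧ D.card = k})
    ⟨_, Finset.univ, isDominating_univ n m, rfl⟩

theorem minLoss_eq (n m : ℕ) : minLoss n m = 5 * domNumber n m - n * m := by
  obtain ⟨D, hD, hcard⟩ := exists_isDominating_card_eq_domNumber n m
  refine IsLeast.csInf_eq ⟨⟨D, hD, by rw [hD.loss_eq, hcard]⟩, ?_⟩
  rintro _ ⟨E, hE, rfl⟩
  have := domNumber_le_card hE
  rw [hE.loss_eq]
  omega

theorem stmt_17_general (n m : ℕ)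
    (h : 2 * ((n : ℤ) + m) - 20 ≤ minLoss n m) :
    ⌈(((n * m : ℤ) + 2 * ((n : ℤ) + m) - 20 : ℤ) : ℚ) / 5⌉ ≤ (domNumber n m : ℤ) ∧
    ((n : ℤ) + 2) * ((m : ℤ) + 2) / 5 - 4 ≤
      ⌈(((n * m : ℤ) + 2 * ((n : ℤ) + m) - 20 : ℤ) : ℚ) / 5⌉ := by
  rw [minLoss_eq] at h
  have hceil : ⌈(((n * m : ℤ) + 2 * ((n : ℤ) + m) - 20 : ℤ) : ℚ) / 5⌉ =
      -(-((n * m : ℤ) + 2 * ((n : ℤ) + m) - 20) / 5) := by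
    exact_mod_cast Rat.ceil_intCast_div_natCast _ 5
  have hprod : ((n : ℤ) + 2) * ((m : ℤ) + 2) = n * m + 2 * ((n : ℤ) + m) + 4 := by ring
  rw [hceil, hprod]
  constructor <;> omega

theorem stmt_17 (n m : ℕ) (hn : 2 ≤ n) (hnm : n ≤ m)
    (h : 2 * ((n : ℤ) + m) - 20 ≤ minLoss n m) :
    ⌈(((n * m : ℤ) + 2 * ((n : ℤ) + m) - 20 : ℤ) : ℚ) / 5⌉ ≤ (domNumber n m : ℤ) ∧
    ((n : ℤ) + 2) * ((m : ℤ) + 2) / 5 - 4 ≤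
      ⌈(((n * m : ℤ) + 2 * ((n : ℤ) + m) - 20 : ℤ) : ℚ) / 5⌉ :=
  stmt_17_general n m h
end
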